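/- arXiv:2604.12120 — 2 statements merged into one kernel-verified Lean document; each statement's English description precedes it below -/
import Mathlib

section
/- Let R be a commutative ring, V an R-module, and let e, y, z be R-linear endomorphisms of V satisfying e∘y − y∘e = z and e∘z = z∘e. Let v, w ∈ V, σ ∈ R, and let k be a natural number such that e^{k+1}(v) = 0 and z(e^k(v)) = σ • w. Then for all natural numbers i and j with i ≥ 1 and i + j = k + 1, one has e^i(y(e^j(v))) = i • (σ • w), where i acts via the natural number scalar action. -/
theorem pow_succ_mul_eq_mul_pow_succ_add {A : Type*} [Ring A] {e y z : A}
    (hyz : e * y - y * e = z) (hez : Commute e z) (n : ℕ) :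
    e ^ (n + 1) * y = y * e ^ (n + 1) + (n + 1) • (z * e ^ n) := by
  have hey : e * y = y * e + z := by rw [← hyz]; abel
  induction n with
  | zero => simp [hey]
  | succ n ih =>
    calc e ^ (n + 2) * y = e * (e ^ (n + 1) * y) := by rw [← mul_assoc, ← pow_succ']
      _ = (e * y) * e ^ (n + 1) + (n + 1) • (z * (e * e ^ n)) := by
        rw [ih, mul_add, ← mul_assoc, mul_smul_comm, ← mul_assoc, hez.eq, mul_assoc z]
      _ = y * e ^ (n + 2) + (n + 2) • (z * e ^ (n + 1)) := by
        rw [hey, ← pow_succ', add_mul, mul_assoc, ← pow_succ', add_assoc, ← succ_nsmul']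

/-- Abstract content of Lemma A.2: if `e∘y − y∘e = z`, `e∘z = z∘e`,
`e^{k+1} v = 0` and `z (e^k v) = σ • w`, then for `i ≥ 1`, `i + j = k + 1`,
one has `e^i (y (e^j v)) = i • (σ • w)`. -/
theorem pow_apply_bracket_once {R : Type*} [CommRing R] {V : Type*} [AddCommGroup V]
    [Module R V] (e y z : Module.End R V)
    (hyz : e ∘ₗ y - y ∘ₗ e = z) (hez : e ∘ₗ z = z ∘ₗ e)
    (v w : V) (σ : R) (k : ℕ)
    (hv : (e ^ (k + 1)) v = 0) (hz : z ((e ^ k) v) = σ • w) :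
    ∀ i j : ℕ, 1 ≤ i → i + j = k + 1 → (e ^ i) (y ((e ^ j) v)) = i • (σ • w) := by
  intro i j hi hij
  obtain ⟨m, rfl⟩ : ∃ m, i = m + 1 := ⟨i - 1, by omega⟩
  obtain rfl : k = m + j := by omega
  have key := congr($(pow_succ_mul_eq_mul_pow_succ_add hyz hez m) ((e ^ j) v))
  simp only [Module.End.mul_apply, LinearMap.add_apply, LinearMap.smul_apply] at key
  rw [key, ← Module.End.mul_apply (e ^ (m + 1)), ← pow_add, add_right_comm, hv, map_zero,
    zero_add, ← Module.End.mul_apply (e ^ m), ← pow_add, hz]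
end

section
/- Let R be a commutative ring, V an R-module, and let e, x, y, z be R-linear endomorphisms of V satisfying e∘x − x∘e = y, e∘y − y∘e = z, and e∘z = z∘e. Let v, w ∈ V, σ ∈ R, and let k be a natural number such that e^{k+1}(v) = 0 and z(e^k(v)) = σ • w. Then for all natural numbers i and j with i ≥ 2 and i + j = k + 2, one has e^i(x(e^j(v))) = (i·(i−1)/2) • (σ • w), where the binomial coefficient i·(i−1)/2 acts via the natural number scalar action. -/
/-!
Leibniz's rule for the adjoint action gives `e^i ∘ x = ∑ₐ C(i, a) • (ad e)^a(x) ∘ e^(i-a)`,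
and `(ad e)^a x` is `x`, `y`, `z`, `0` for `a = 0, 1, 2, ≥ 3`. Applied to `e^j v` with
`i + j = k + 2`, the terms with `a ≤ 1` vanish because `e^(k+1) v = 0`, leaving
`C(i, 2) • z (e^k v)`.
-/

open Finset LieAlgebra

attribute [local instance] LieRing.ofAssociativeRing

theorem Module.End.pow_apply_apply_eq_sum {R V : Type*} [CommRing R] [AddCommGroup V]
    [Module R V] (e x : Module.End R V) (u : V) (n : ℕ) :
    (e ^ n) (x u) = ∑ ab ∈ antidiagonal n,
      n.choose ab.1 • ((ad R (Module.End R V) e ^ ab.1) x) ((e ^ ab.2) u) :=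
  LieModule.toEnd_pow_lie R e x u n

/-- Abstract content of Lemma A.3: if `e∘x − x∘e = y`, `e∘y − y∘e = z`,
`e∘z = z∘e`, `e^{k+1} v = 0` and `z (e^k v) = σ • w`, then for `i ≥ 2`,
`i + j = k + 2`, one has `e^i (x (e^j v)) = (i·(i−1)/2) • (σ • w)`. -/
theorem pow_apply_bracket_twice {R : Type*} [CommRing R] {V : Type*} [AddCommGroup V]
    [Module R V] (e x y z : Module.End R V)
    (hxy : e ∘ₗ x - x ∘ₗ e = y) (hyz : e ∘ₗ y - y ∘ₗ e = z) (hez : e ∘ₗ z = z ∘ₗ e)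
    (v w : V) (σ : R) (k : ℕ)
    (hv : (e ^ (k + 1)) v = 0) (hz : z ((e ^ k) v) = σ • w) :
    ∀ i j : ℕ, 2 ≤ i → i + j = k + 2 →
      (e ^ i) (x ((e ^ j) v)) = (i * (i - 1) / 2) • (σ • w) := by
  intro i j hi hij
  have hadx : ad R _ e x = y := hxy
  have hady : ad R _ e y = z := hyz
  have had2 : (ad R _ e ^ 2) x = z := by rw [sq, Module.End.mul_apply, hadx, hady]
  have had3 : (ad R _ e ^ 3) x = 0 := by
    rw [pow_succ', Module.End.mul_apply, had2]
    exact sub_eq_zero.mpr hez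
  rw [Module.End.pow_apply_apply_eq_sum,
    sum_eq_single_of_mem (2, i - 2) (HasAntidiagonal.mem_antidiagonal.mpr (by omega))]
  · rw [had2, ← Module.End.mul_apply (e ^ (i - 2)), ← pow_add, show i - 2 + j = k by omega, hz,
      Nat.choose_two_right]
  · rintro ⟨a, b⟩ hab hne
    rw [HasAntidiagonal.mem_antidiagonal] at hab
    have ha : a ≠ 2 := by
      rintro rfl
      exact hne (Prod.ext rfl (by omega))
    rw [← Module.End.mul_apply (e ^ b), ← pow_add]
    obtain ha | ha := ha.lt_or_gt
    · rw [Module.End.pow_map_zero_of_le (by omega) hv, map_zero, smul_zero]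
    · rw [Module.End.pow_map_zero_of_le ha had3, LinearMap.zero_apply, smul_zero]
end
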